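/- arXiv:1606.05025 — 6 statements merged into one kernel-verified Lean document; each statement's English description precedes it below -/
import Mathlib

section
/- Let g be a complex Gaussian vector in ℂ^M with per-component variance β > 0, where M ≥ 2. Then E[1 / ‖g‖²] = 1 / ((M − 1)·β). -/
/-! For `S = ∑ Xᵢ²` a sum of `n` independent centred Gaussians of variance `v`, write
`1 / S = ∫₀^∞ exp (-S t) dt` and exchange the integrals. Independence factorises
`E[exp (-S t)]` into `(1 + 2 v t) ^ (-n/2)`, and
`∫₀^∞ (1 + 2 v t) ^ (-n/2) dt = 1 / ((n - 2) v)` when `n > 2`. The real and imaginary parts of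
`g` are `n = 2M` such Gaussians with `v = β / 2`. -/

open MeasureTheory ProbabilityTheory

/-- A family `f : ι → Ω → ℂ` of complex random variables is jointly complex Gaussian with
variances `v : ι → ℝ` if all the real and imaginary parts `Re (f i)`, `Im (f i)` (indexed by
`ι × Bool`) are mutually independent, each with law `gaussianReal 0 (v i / 2)`. -/
def IsJointComplexGaussian {Ω : Type*} {ι : Type*} [MeasurableSpace Ω] (P : Measure Ω)
    (f : ι → Ω → ℂ) (v : ι → ℝ) : Prop :=
  iIndepFun
      (fun p : ι × Bool => fun ω => if p.2 then (f p.1 ω).im else (f p.1 ω).re) P ∧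
    ∀ p : ι × Bool,
      Measure.map (fun ω => if p.2 then (f p.1 ω).im else (f p.1 ω).re) P
        = gaussianReal 0 (Real.toNNReal (v p.1 / 2))

/-- A random vector `g : Ω → ℂ^M` is complex Gaussian with per-component variance `β` if its
`2M` real scalar components are mutually independent with law `gaussianReal 0 (β/2)`. -/
def IsComplexGaussianVector {Ω : Type*} [MeasurableSpace Ω] (P : Measure Ω) {M : ℕ}
    (g : Ω → EuclideanSpace ℂ (Fin M)) (β : ℝ) : Prop :=
  IsJointComplexGaussian P (fun (i : Fin M) ω => g ω i) (fun _ => β)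

open Real Set Filter Topology
open scoped ENNReal NNReal

lemma lintegral_exp_neg_mul_Ioi {s : ℝ} (hs : 0 < s) :
    ∫⁻ t in Ioi 0, ENNReal.ofReal (exp (-s * t)) = ENNReal.ofReal s⁻¹ := by
  rw [← ofReal_integral_eq_lintegral_ofReal (integrableOn_exp_mul_Ioi (by linarith) 0)
    (.of_forall fun _ => (exp_pos _).le), integral_exp_mul_Ioi (by linarith)]
  simp [neg_div, one_div]

lemma lintegral_Ioi_one_add_mul_rpow_neg {c a : ℝ} (hc : 0 < c) (ha : 1 < a) :
    ∫⁻ t in Ioi 0, ENNReal.ofReal ((1 + c * t) ^ (-a))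
      = ENNReal.ofReal ((c * (a - 1))⁻¹) := by
  have hbase : ∀ t ∈ Ici (0 : ℝ), 0 < 1 + c * t := fun t ht => by nlinarith [mem_Ici.1 ht]
  have hderiv : ∀ t ∈ Ici (0 : ℝ), HasDerivAt (fun t => (1 + c * t) ^ (1 - a) / (c * (1 - a)))
      ((1 + c * t) ^ (-a)) t := by
    intro t ht
    refine ((((hasDerivAt_id' t).const_mul c).const_add 1).rpow_const
      (Or.inl (hbase t ht).ne')).div_const _ |>.congr_deriv ?_
    have : 1 - a ≠ 0 := by linarith
    simp only [mul_one, sub_sub_cancel_left]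
    field_simp
  have hnonneg : ∀ t ∈ Ioi (0 : ℝ), 0 ≤ (1 + c * t) ^ (-a) :=
    fun t ht => (rpow_pos_of_pos (hbase t (mem_Ici_of_Ioi ht)) _).le
  have htendsto : Tendsto (fun t => (1 + c * t) ^ (1 - a) / (c * (1 - a))) atTop (𝓝 0) := by
    have h := (tendsto_rpow_neg_atTop (by linarith : 0 < a - 1)).comp
      (tendsto_atTop_add_const_left _ 1 (tendsto_id.const_mul_atTop hc))
    simpa [neg_sub] using h.div_const (c * (1 - a))
  rw [← ofReal_integral_eq_lintegral_ofReal
      (integrableOn_Ioi_deriv_of_nonneg' hderiv hnonneg htendsto)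
      ((ae_restrict_iff' measurableSet_Ioi).2 (.of_forall hnonneg)),
    integral_Ioi_of_hasDerivAt_of_nonneg' hderiv hnonneg htendsto, zero_sub, mul_zero, add_zero,
    one_rpow, ← div_neg, ← mul_neg, neg_sub, one_div]

lemma lintegral_exp_neg_sq_mul_gaussianReal {v : ℝ≥0} (hv : v ≠ 0) {t : ℝ} (ht : 0 ≤ t) :
    ∫⁻ x, ENNReal.ofReal (exp (-x ^ 2 * t)) ∂gaussianReal 0 v
      = ENNReal.ofReal ((1 + 2 * v * t) ^ (-2⁻¹ : ℝ)) := by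
  have hv' : (0 : ℝ) < v := by positivity
  set b : ℝ := t + (2 * (v : ℝ))⁻¹ with hb_def
  have hb : 0 < b := by positivity
  have hdensity : ∀ x, gaussianPDF 0 v x * ENNReal.ofReal (exp (-x ^ 2 * t))
      = ENNReal.ofReal ((√(2 * π * v))⁻¹ * exp (-b * x ^ 2)) := by
    intro x
    rw [gaussianPDF, gaussianPDFReal, ← ENNReal.ofReal_mul (by positivity), mul_assoc,
      ← exp_add]
    congr 3
    rw [hb_def]
    field_simp
    ring
  rw [gaussianReal_of_var_ne_zero 0 hv,
    lintegral_withDensity_eq_lintegral_mul₀ (measurable_gaussianPDF 0 v).aemeasurable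
      (by fun_prop)]
  simp only [Pi.mul_apply, hdensity]
  rw [← ofReal_integral_eq_lintegral_ofReal ((integrable_exp_neg_mul_sq hb).const_mul _)
    (.of_forall fun x => by positivity), integral_const_mul, integral_gaussian]
  congr 1
  rw [← sqrt_inv, ← sqrt_mul (by positivity), rpow_neg (by positivity),
    show (2⁻¹ : ℝ) = 1 / 2 by norm_num, ← sqrt_eq_rpow, ← sqrt_inv, hb_def]
  congr 1
  field_simp
  ring

section

variable {Ω : Type*} [MeasurableSpace Ω]

lemma lintegral_ofReal_inv_eq_lintegral_Ioi_exp {μ : Measure Ω} [SFinite μ] {f : Ω → ℝ}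
    (hf : AEMeasurable f μ) (hpos : ∀ᵐ ω ∂μ, 0 < f ω) :
    ∫⁻ ω, ENNReal.ofReal (f ω)⁻¹ ∂μ
      = ∫⁻ t in Ioi 0, ∫⁻ ω, ENNReal.ofReal (exp (-f ω * t)) ∂μ := by
  have hmeas : AEMeasurable (Function.uncurry fun ω t => ENNReal.ofReal (exp (-f ω * t)))
      (μ.prod (volume.restrict (Ioi 0))) := by
    have := hf.comp_quasiMeasurePreserving
      (Measure.quasiMeasurePreserving_fst (ν := volume.restrict (Ioi (0 : ℝ))))
    fun_prop
  rw [← lintegral_lintegral_swap hmeas]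
  refine lintegral_congr_ae ?_
  filter_upwards [hpos] with ω hω
  exact (lintegral_exp_neg_mul_Ioi hω).symm

lemma ProbabilityTheory.iIndepFun.lintegral_prod {ι : Type*} [Fintype ι] {μ : Measure Ω}
    {X : ι → Ω → ℝ≥0∞} (hX : iIndepFun X μ) (hmeas : ∀ i, AEMeasurable (X i) μ) :
    ∫⁻ ω, ∏ i, X i ω ∂μ = ∏ i, ∫⁻ ω, X i ω ∂μ := by
  have hprod := lintegral_prod_eq_prod_lintegral_of_indepFun Finset.univ _
    (hX.congr fun i => (hmeas i).ae_eq_mk) fun i => (hmeas i).measurable_mk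
  calc ∫⁻ ω, ∏ i, X i ω ∂μ = ∫⁻ ω, ∏ i, (hmeas i).mk _ ω ∂μ := by
        refine lintegral_congr_ae ?_
        filter_upwards [ae_all_iff.2 fun i => (hmeas i).ae_eq_mk] with ω hω
        simp only [hω]
    _ = ∏ i, ∫⁻ ω, X i ω ∂μ := by
        rw [hprod]
        exact Finset.prod_congr rfl fun i _ => lintegral_congr_ae (hmeas i).ae_eq_mk.symm

lemma aemeasurable_of_map_eq_gaussianReal {P : Measure Ω} {X : Ω → ℝ} {m : ℝ} {v : ℝ≥0}
    (hX : P.map X = gaussianReal m v) : AEMeasurable X P :=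
  .of_map_ne_zero (hX ▸ IsProbabilityMeasure.ne_zero _)

lemma ae_ne_of_map_eq_gaussianReal {P : Measure Ω} {X : Ω → ℝ} {m : ℝ} {v : ℝ≥0}
    (hv : v ≠ 0) (hX : P.map X = gaussianReal m v) (c : ℝ) :
    ∀ᵐ ω ∂P, X ω ≠ c := by
  have hXm := aemeasurable_of_map_eq_gaussianReal hX
  have := nullSingletonClass_gaussianReal (μ := m) hv
  rw [ae_iff]
  simp only [ne_eq, not_not]
  have h := Measure.map_apply_of_aemeasurable hXm (measurableSet_singleton c)
  rw [hX, measure_singleton] at h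
  exact h.symm

section GaussianSumSq

variable {ι : Type*} [Fintype ι] {P : Measure Ω} {X : ι → Ω → ℝ} {v : ℝ≥0}

lemma lintegral_exp_neg_sum_sq_mul_of_iIndepFun (hv : v ≠ 0) (hind : iIndepFun X P)
    (hX : ∀ i, P.map (X i) = gaussianReal 0 v) {t : ℝ} (ht : 0 ≤ t) :
    ∫⁻ ω, ENNReal.ofReal (exp (-(∑ i, X i ω ^ 2) * t)) ∂P
      = ENNReal.ofReal ((1 + 2 * v * t) ^ (-(Fintype.card ι / 2 : ℝ))) := by
  have hXm i := aemeasurable_of_map_eq_gaussianReal (hX i)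
  set φ : ℝ → ℝ≥0∞ := fun x => ENNReal.ofReal (exp (-x ^ 2 * t))
  have hφ : Measurable φ := by fun_prop
  calc ∫⁻ ω, ENNReal.ofReal (exp (-(∑ i, X i ω ^ 2) * t)) ∂P
        = ∫⁻ ω, ∏ i, φ (X i ω) ∂P := by
        refine lintegral_congr fun ω => ?_
        rw [← ENNReal.ofReal_prod_of_nonneg fun _ _ => (exp_pos _).le, ← exp_sum]
        simp only [neg_mul, Finset.sum_mul, Finset.sum_neg_distrib]
    _ = ∏ i, ∫⁻ ω, φ (X i ω) ∂P :=
        (hind.comp _ fun _ => hφ).lintegral_prod fun i => hφ.comp_aemeasurable (hXm i)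
    _ = ∏ _ : ι, ∫⁻ x, φ x ∂gaussianReal 0 v := Finset.prod_congr rfl fun i _ => by
        rw [← hX i, lintegral_map' hφ.aemeasurable (hXm i)]
    _ = ENNReal.ofReal ((1 + 2 * v * t) ^ (-(Fintype.card ι / 2 : ℝ))) := by
        rw [lintegral_exp_neg_sq_mul_gaussianReal hv ht, Finset.prod_const, Finset.card_univ,
          ← ENNReal.ofReal_pow (by positivity), ← rpow_mul_natCast (by positivity)]
        congr 2
        ring

lemma lintegral_inv_sum_sq_of_iIndepFun (hv : v ≠ 0) (hind : iIndepFun X P)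
    (hX : ∀ i, P.map (X i) = gaussianReal 0 v) (hι : 2 < Fintype.card ι) :
    ∫⁻ ω, ENNReal.ofReal (∑ i, X i ω ^ 2)⁻¹ ∂P
      = ENNReal.ofReal (((Fintype.card ι - 2 : ℝ) * v)⁻¹) := by
  have : IsProbabilityMeasure P := hind.isProbabilityMeasure
  have hXm i := aemeasurable_of_map_eq_gaussianReal (hX i)
  have hι' : (2 : ℝ) < Fintype.card ι := by exact_mod_cast hι
  obtain ⟨i₀⟩ : Nonempty ι := Fintype.card_pos_iff.1 (by omega)
  have hpos : ∀ᵐ ω ∂P, 0 < ∑ i, X i ω ^ 2 := by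
    filter_upwards [ae_ne_of_map_eq_gaussianReal hv (hX i₀) 0] with ω hω
    exact lt_of_lt_of_le (by positivity)
      (Finset.single_le_sum (fun i _ => sq_nonneg (X i ω)) (Finset.mem_univ i₀))
  rw [lintegral_ofReal_inv_eq_lintegral_Ioi_exp (by fun_prop) hpos,
    setLIntegral_congr_fun measurableSet_Ioi fun t ht =>
      lintegral_exp_neg_sum_sq_mul_of_iIndepFun hv hind hX (le_of_lt ht),
    lintegral_Ioi_one_add_mul_rpow_neg (by positivity) (by linarith)]
  congr 2
  ring

lemma integral_inv_sum_sq_of_iIndepFun (hv : v ≠ 0) (hind : iIndepFun X P)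
    (hX : ∀ i, P.map (X i) = gaussianReal 0 v) (hι : 2 < Fintype.card ι) :
    ∫ ω, (∑ i, X i ω ^ 2)⁻¹ ∂P = ((Fintype.card ι - 2 : ℝ) * v)⁻¹ := by
  have hXm i := aemeasurable_of_map_eq_gaussianReal (hX i)
  have hι' : (2 : ℝ) < Fintype.card ι := by exact_mod_cast hι
  rw [integral_eq_lintegral_of_nonneg_ae (.of_forall fun ω => by positivity) (by fun_prop),
    lintegral_inv_sum_sq_of_iIndepFun hv hind hX hι, ENNReal.toReal_ofReal (by positivity)]

end GaussianSumSq

end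

lemma EuclideanSpace.norm_sq_eq_sum_re_im_sq {ι : Type*} [Fintype ι] (z : EuclideanSpace ℂ ι) :
    ‖z‖ ^ 2 = ∑ p : ι × Bool, (if p.2 then (z p.1).im else (z p.1).re) ^ 2 := by
  rw [EuclideanSpace.norm_sq_eq, Fintype.sum_prod_type]
  refine Finset.sum_congr rfl fun i _ => ?_
  rw [Fintype.sum_bool, Complex.sq_norm, Complex.normSq_apply]
  simp only [if_true, Bool.false_eq_true, if_false]
  ring

theorem integral_inv_norm_sq_complexGaussian_general {Ω : Type*} [MeasurableSpace Ω]
    (P : Measure Ω) (M : ℕ) (hM : 2 ≤ M) (β : ℝ) (hβ : 0 < β)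
    (g : Ω → EuclideanSpace ℂ (Fin M))
    (hg : IsComplexGaussianVector P g β) :
    ∫ ω, 1 / ‖g ω‖ ^ 2 ∂P = 1 / (((M : ℝ) - 1) * β) := by
  obtain ⟨hind, hmap⟩ := hg
  have hv : (β / 2).toNNReal ≠ 0 := by simpa using hβ
  have hcard : 2 < Fintype.card (Fin M × Bool) := by simp; omega
  simp_rw [one_div, EuclideanSpace.norm_sq_eq_sum_re_im_sq]
  rw [integral_inv_sum_sq_of_iIndepFun hv hind hmap hcard, Fintype.card_prod, Fintype.card_fin,
    Fintype.card_bool, Real.coe_toNNReal _ (half_pos hβ).le]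
  push_cast
  ring

/-- For a complex Gaussian vector `g` in `ℂ^M` with per-component variance `β > 0` and `M ≥ 2`,
`E[1/‖g‖²] = 1/((M−1)β)`. -/
theorem integral_inv_norm_sq_complexGaussian {Ω : Type*} [MeasurableSpace Ω]
    (P : Measure Ω) [IsProbabilityMeasure P] (M : ℕ) (hM : 2 ≤ M) (β : ℝ) (hβ : 0 < β)
    (g : Ω → EuclideanSpace ℂ (Fin M))
    (hg : IsComplexGaussianVector P g β) :
    ∫ ω, 1 / ‖g ω‖ ^ 2 ∂P = 1 / (((M : ℝ) - 1) * β) :=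
  integral_inv_norm_sq_complexGaussian_general P M hM β hβ g hg
end

section
/- Fix L ≥ 1, K_u ≥ 1, cell index j ∈ Fin L, user index n ∈ Fin K_u, constants E_u > 0, E_d > 0, σ² > 0, κ ≥ 0, coefficients β_u : Fin L → Fin K_u → ℝ with β_u j n > 0 and β_u l m ≥ 0, β_b : Fin L → ℝ with β_b l ≥ 0, and β_bjj ≥ 0. For M : ℕ define P_u(M) = E_u/M, P_d(M) = E_d/M and R(M) = log₂( 1 + P_u(M)·(M−1)·β_u j n / ( P_u(M)·Σ_{(l,m)≠(j,n)} β_u l m + P_d(M)·Σ_{l≠j} β_b l + σ² + κ·P_d(M)·β_bjj ) ). Then R(M) → log₂(1 + β_u j n · E_u/σ²) as M → ∞ (Filter.atTop). -/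
open Filter Topology

/-! With `P = E/M`, the array gain `P (M - 1)` of the desired signal tends to `E`, while every
interference term in the denominator is `O(1/M)`, so the SINR tends to `β E / σ²`; the rate
follows by continuity of `log₂` away from `0`. -/

lemma tendsto_const_div_natCast_mul_natCast_sub_one (c : ℝ) :
    Tendsto (fun M : ℕ => c / M * ((M : ℝ) - 1)) atTop (𝓝 c) := by
  have hlim : Tendsto (fun M : ℕ => c - c / M) atTop (𝓝 c) := by
    simpa using tendsto_const_nhds.sub (tendsto_const_div_atTop_nhds_zero_nat c)
  refine hlim.congr' ?_
  filter_upwards [eventually_ne_atTop 0] with M hM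
  field_simp

theorem asymptotic_uplink_rate_perfect_csi_general
    (L Ku : ℕ) (j : Fin L) (n : Fin Ku)
    (Eu Ed σsq : ℝ) (hEu : 0 < Eu) (hσ : 0 < σsq)
    (κ : ℝ)
    (βu : Fin L → Fin Ku → ℝ) (hβujn : 0 < βu j n)
    (βb : Fin L → ℝ) (βbjj : ℝ) :
    Filter.Tendsto (fun M : ℕ =>
        Real.logb 2 (1 + (Eu / M) * ((M : ℝ) - 1) * βu j n /
          ((Eu / M) * ∑ p ∈ Finset.univ.erase (j, n), βu p.1 p.2
            + (Ed / M) * ∑ l ∈ Finset.univ.erase j, βb l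
            + σsq + κ * (Ed / M) * βbjj)))
      Filter.atTop (nhds (Real.logb 2 (1 + βu j n * Eu / σsq))) := by
  have hPu := tendsto_const_div_atTop_nhds_zero_nat Eu
  have hPd := tendsto_const_div_atTop_nhds_zero_nat Ed
  have hsignal := (tendsto_const_div_natCast_mul_natCast_sub_one Eu).mul_const (βu j n)
  have hinterference_plus_noise : Tendsto (fun M : ℕ =>
      (Eu / M) * ∑ p ∈ Finset.univ.erase (j, n), βu p.1 p.2
        + (Ed / M) * ∑ l ∈ Finset.univ.erase j, βb l
        + σsq + κ * (Ed / M) * βbjj) atTop (𝓝 σsq) := by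
    simpa using (((hPu.mul_const _).add (hPd.mul_const _)).add_const σsq).add
      ((hPd.const_mul κ).mul_const βbjj)
  have hsinr := (hsignal.div hinterference_plus_noise hσ.ne').const_add 1
  rw [mul_comm (βu j n) Eu]
  exact (Real.continuousAt_logb (by positivity)).tendsto.comp hsinr

/-- Theorem 1, uplink per-user rate: with perfect CSI and transmit powers scaled as
`P_u = E_u/M`, `P_d = E_d/M`, the closed-form uplink achievable rate of user `n` in cell `j`
converges to `log₂(1 + β_u(j,n)·E_u/σ²)` as the number of BS antennas `M → ∞`. -/
theorem asymptotic_uplink_rate_perfect_csi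
    (L Ku : ℕ) (hL : 1 ≤ L) (hKu : 1 ≤ Ku) (j : Fin L) (n : Fin Ku)
    (Eu Ed σsq : ℝ) (hEu : 0 < Eu) (hEd : 0 < Ed) (hσ : 0 < σsq)
    (κ : ℝ) (hκ : 0 ≤ κ)
    (βu : Fin L → Fin Ku → ℝ) (hβujn : 0 < βu j n) (hβu : ∀ l m, 0 ≤ βu l m)
    (βb : Fin L → ℝ) (hβb : ∀ l, 0 ≤ βb l) (βbjj : ℝ) (hβbjj : 0 ≤ βbjj) :
    Filter.Tendsto (fun M : ℕ =>
        Real.logb 2 (1 + (Eu / M) * ((M : ℝ) - 1) * βu j n /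
          ((Eu / M) * ∑ p ∈ Finset.univ.erase (j, n), βu p.1 p.2
            + (Ed / M) * ∑ l ∈ Finset.univ.erase j, βb l
            + σsq + κ * (Ed / M) * βbjj)))
      Filter.atTop (nhds (Real.logb 2 (1 + βu j n * Eu / σsq))) :=
  asymptotic_uplink_rate_perfect_csi_general L Ku j n Eu Ed σsq hEu hσ κ βu hβujn βb βbjj
end

section
/- Fix L ≥ 1, K_u ≥ 1, K_d ≥ 1, cell index l ∈ Fin L, user index k ∈ Fin K_d, constants E_u > 0, E_d > 0, σ² > 0, κ ≥ 0, coefficients β_d : Fin L → Fin K_d → ℝ with β_d l i > 0 for all i, β_c : Fin L → ℝ with β_c j ≥ 0 and β_c l = β_d l k, and β_I : Fin L → Fin K_u → ℝ with β_I j n ≥ 0. For M : ℕ define P_u(M) = E_u/M, P_d(M) = E_d/M, η_l(M) = 1/(M·Σ_i β_d l i), I(M) = Σ_{i≠k} η_l(M)·P_d(M)·β_d l k·β_d l i·(M−2) + P_d(M)·Σ_{j≠l} β_c j + Σ_{j} Σ_{n} P_u(M)·β_I j n, and R(M) = log₂( 1 + η_l(M)·P_d(M)·(M−1)·(M−2)·(β_d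 l k)² / ( I(M) − P_u(M)·β_I l k + σ² + κ·P_u(M)·β_I l k ) ). Then R(M) → log₂( 1 + (β_d l k)²·E_d / ( (Σ_i β_d l i)·σ² ) ) as M → ∞ (Filter.atTop). -/
/-!
Under the `1/M` power scaling the desired signal power `η P_d (M-1)(M-2) β²` still converges,
to `β² E_d / Σᵢ β_{l,i}`, because the array gain `(M-1)(M-2)/M²` of conjugate beamforming exactly
compensates the scaled-down power, while every interference term (intra-cell, inter-cell and
UE-UE) keeps one uncompensated factor `1/M` and vanishes. So the SINR tends to the signal power
over `σ²`, and `log₂ (1 + ·)` is continuous there.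
-/

open Filter Topology Finset

lemma tendsto_natCast_sub_div_self (c : ℝ) :
    Tendsto (fun M : ℕ => ((M : ℝ) - c) / M) atTop (𝓝 1) := by
  have h := (tendsto_const_nhds (x := (1 : ℝ))).sub (tendsto_const_div_atTop_nhds_zero_nat c)
  rw [sub_zero] at h
  refine h.congr' ?_
  filter_upwards [eventually_ne_atTop 0] with M hM
  rw [sub_div, div_self (Nat.cast_ne_zero.mpr hM)]

lemma tendsto_signal_power (β E S : ℝ) :
    Tendsto (fun M : ℕ => 1 / (M * S) * (E / M) * ((M : ℝ) - 1) * ((M : ℝ) - 2) * β ^ 2)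
      atTop (𝓝 (β ^ 2 * E / S)) := by
  have h := ((tendsto_natCast_sub_div_self 1).mul (tendsto_natCast_sub_div_self 2)).const_mul
    (β ^ 2 * E / S)
  rw [mul_one, mul_one] at h
  refine h.congr fun M => ?_
  simp only [div_eq_mul_inv, mul_inv, one_mul]
  ring

lemma tendsto_intracell_interference (β b E S : ℝ) :
    Tendsto (fun M : ℕ => 1 / (M * S) * (E / M) * β * b * ((M : ℝ) - 2)) atTop (𝓝 0) := by
  have h := ((tendsto_natCast_sub_div_self 2).mul
    (tendsto_const_div_atTop_nhds_zero_nat E)).const_mul (β * b / S)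
  rw [mul_zero, mul_zero] at h
  refine h.congr fun M => ?_
  simp only [div_eq_mul_inv, mul_inv, one_mul]
  ring

lemma tendsto_const_div_natCast_mul (E c : ℝ) :
    Tendsto (fun M : ℕ => E / M * c) atTop (𝓝 0) := by
  simpa using (tendsto_const_div_atTop_nhds_zero_nat E).mul_const c

theorem asymptotic_downlink_rate_perfect_csi_general
    (L Ku Kd : ℕ)
    (l : Fin L) (k : ℕ) (hkd : k < Kd) (hku : k < Ku)
    (Eu Ed σsq : ℝ) (hEd : 0 < Ed) (hσ : 0 < σsq)
    (κ : ℝ)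
    (βd : Fin L → Fin Kd → ℝ) (hβd : ∀ i, 0 < βd l i)
    (βc : Fin L → ℝ)
    (βI : Fin L → Fin Ku → ℝ) :
    Filter.Tendsto (fun M : ℕ =>
        let Pu : ℝ := Eu / M
        let Pd : ℝ := Ed / M
        let η : ℝ := 1 / (M * ∑ i, βd l i)
        let I : ℝ := ∑ i ∈ Finset.univ.erase (⟨k, hkd⟩ : Fin Kd),
            η * Pd * βd l ⟨k, hkd⟩ * βd l i * ((M : ℝ) - 2)
          + Pd * ∑ j ∈ Finset.univ.erase l, βc j
          + ∑ j, ∑ n, Pu * βI j n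
        Real.logb 2 (1 + η * Pd * ((M : ℝ) - 1) * ((M : ℝ) - 2) * (βd l ⟨k, hkd⟩) ^ 2 /
          (I - Pu * βI l ⟨k, hku⟩ + σsq + κ * Pu * βI l ⟨k, hku⟩)))
      Filter.atTop
      (nhds (Real.logb 2 (1 + (βd l ⟨k, hkd⟩) ^ 2 * Ed / ((∑ i, βd l i) * σsq)))) := by
  set β := βd l ⟨k, hkd⟩
  set S := ∑ i, βd l i
  have hS : 0 < S := sum_pos (fun i _ => hβd i) ⟨⟨k, hkd⟩, mem_univ _⟩
  have hnoise :=
    (((((tendsto_finsetSum (univ.erase ⟨k, hkd⟩) fun i _ =>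
          tendsto_intracell_interference β (βd l i) Ed S).add
        (tendsto_const_div_natCast_mul Ed (∑ j ∈ univ.erase l, βc j))).add
        (tendsto_finsetSum univ fun j _ => tendsto_finsetSum univ fun n _ =>
          tendsto_const_div_natCast_mul Eu (βI j n))).sub
        (tendsto_const_div_natCast_mul Eu (βI l ⟨k, hku⟩))).add_const σsq).add
      (((tendsto_const_div_atTop_nhds_zero_nat Eu).const_mul κ).mul_const (βI l ⟨k, hku⟩))
  simp only [sum_const_zero, add_zero, zero_add, sub_zero, mul_zero, zero_mul] at hnoise
  have hrate := (Real.continuousAt_logb (b := 2) (by positivity)).tendsto.comp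
    (((tendsto_signal_power β Ed S).div hnoise hσ.ne').const_add 1)
  rwa [div_div (β ^ 2 * Ed) S σsq] at hrate

/-- Theorem 1, downlink per-user rate: with perfect CSI and transmit powers scaled as
`P_u = E_u/M`, `P_d = E_d/M`, the closed-form downlink achievable rate of full-duplex user `k`
in cell `l` converges to `log₂(1 + β_d(l,k)²·E_d/((Σᵢ β_d(l,i))·σ²))` as `M → ∞`.
The full-duplex user `k` indexes both a downlink user (in `Fin Kd`) and an uplink user
(in `Fin Ku`). -/
theorem asymptotic_downlink_rate_perfect_csi
    (L Ku Kd : ℕ) (hL : 1 ≤ L) (hKu : 1 ≤ Ku) (hKd : 1 ≤ Kd)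
    (l : Fin L) (k : ℕ) (hkd : k < Kd) (hku : k < Ku)
    (Eu Ed σsq : ℝ) (hEu : 0 < Eu) (hEd : 0 < Ed) (hσ : 0 < σsq)
    (κ : ℝ) (hκ : 0 ≤ κ)
    (βd : Fin L → Fin Kd → ℝ) (hβd : ∀ i, 0 < βd l i)
    (βc : Fin L → ℝ) (hβc : ∀ j, 0 ≤ βc j) (hβcl : βc l = βd l ⟨k, hkd⟩)
    (βI : Fin L → Fin Ku → ℝ) (hβI : ∀ j n, 0 ≤ βI j n) :
    Filter.Tendsto (fun M : ℕ =>
        let Pu : ℝ := Eu / M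
        let Pd : ℝ := Ed / M
        let η : ℝ := 1 / (M * ∑ i, βd l i)
        let I : ℝ := ∑ i ∈ Finset.univ.erase (⟨k, hkd⟩ : Fin Kd),
            η * Pd * βd l ⟨k, hkd⟩ * βd l i * ((M : ℝ) - 2)
          + Pd * ∑ j ∈ Finset.univ.erase l, βc j
          + ∑ j, ∑ n, Pu * βI j n
        Real.logb 2 (1 + η * Pd * ((M : ℝ) - 1) * ((M : ℝ) - 2) * (βd l ⟨k, hkd⟩) ^ 2 /
          (I - Pu * βI l ⟨k, hku⟩ + σsq + κ * Pu * βI l ⟨k, hku⟩)))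
      Filter.atTop
      (nhds (Real.logb 2 (1 + (βd l ⟨k, hkd⟩) ^ 2 * Ed / ((∑ i, βd l i) * σsq)))) :=
  asymptotic_downlink_rate_perfect_csi_general L Ku Kd l k hkd hku Eu Ed σsq hEd hσ κ βd hβd βc βI
end

section
/- Fix L ≥ 1, K_u ≥ 1, cell index j ∈ Fin L, user index n ∈ Fin K_u, constants E_tr > 0, E_u > 0, E_d > 0, σ² > 0, κ ≥ 0, coefficients β_u : Fin L → Fin K_u → ℝ with β_u j n > 0 and β_u l m ≥ 0, β_b : Fin L → ℝ with β_b l ≥ 0, and β_bjj ≥ 0. For M : ℕ with M ≥ 1 define P_tr(M) = E_tr/√M, P_u(M) = E_u/√M, P_d(M) = E_d/√M, λ(M) = σ² + P_tr(M)·Σ_l β_u l n, Ĩ(M) = P_tr(M)·P_u(M)·Σ_{l≠j} [ (M+1)·(β_u l n)² + (Σ_{l₁≠l} β_u l₁ n)·β_u l n + β_u l n·σ²/P_tr(M) ], Ñ(M) = λ(M)·( P_d(M)·Σ_{l≠j} β_b l + P_u(M)·Σ_l Σ_{m≠n} β_u l m + σ² + κ·P_d(M)·β_bjj ), and R(M)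 = log₂( 1 + P_tr(M)·P_u(M)·(M−1)·(β_u j n)² / ( P_u(M)·β_u j n·(σ² + P_tr(M)·Σ_{l≠j} β_u l n) + Ĩ(M) + Ñ(M) ) ). Then R(M) → log₂( 1 + E_tr·E_u·(β_u j n)² / ( E_tr·E_u·Σ_{l≠j} (β_u l n)² + σ⁴ ) ) as M → ∞ (Filter.atTop). -/
/-!
With `x = 1/√M`, every power is `E/√M = E·x`, the array gain is `M = 1/x²`, and after
multiplying out, the SINR of Proposition 2 becomes a ratio of polynomials in `x` whose
denominator at `x = 0` is `E_tr·E_u·Σ_{l≠j} β_u(l,n)² + σ⁴ > 0`: the only `M`-growing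
interference is the pilot-contaminated term `P_tr·P_u·(M+1)·β_u(l,n)²`, which stays of
order one. The rate is thus a continuous function of `x` near `0`, and `x → 0`.
-/

open Filter Finset Real Topology

theorem tendsto_comp_inv_sqrt_natCast {X : Type*} [TopologicalSpace X] {f : ℝ → X}
    (hf : ContinuousAt f 0) : Tendsto (fun M : ℕ => f (√(M : ℝ))⁻¹) atTop (𝓝 (f 0)) :=
  hf.tendsto.comp <| tendsto_inv_atTop_zero.comp <|
    tendsto_sqrt_atTop.comp tendsto_natCast_atTop_atTop

section ScaledSINR

variable (Etr Eu σsq β s1 s2 s3 sall C : ℝ)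

/-- The SINR of Proposition 2 at `x = 1/√M`, with `s1 = Σ_{l≠j} β_u(l,n)`,
`s2 = Σ_{l≠j} β_u(l,n)²`, `s3 = Σ_{l≠j} (Σ_{l₁≠l} β_u(l₁,n)) β_u(l,n)`, `sall = Σ_l β_u(l,n)`,
and `C·x` the second factor of `Ñ` minus `σ²`. -/
noncomputable def scaledUplinkSINR (x : ℝ) : ℝ :=
  Etr * Eu * (1 - x ^ 2) * β ^ 2 /
    (Eu * β * x * (σsq + Etr * s1 * x) + Etr * Eu * ((1 + x ^ 2) * s2 + x ^ 2 * s3)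
      + Eu * σsq * x * s1 + (σsq + Etr * sall * x) * (C * x + σsq))

theorem scaledUplinkSINR_zero :
    scaledUplinkSINR Etr Eu σsq β s1 s2 s3 sall C 0
      = Etr * Eu * β ^ 2 / (Etr * Eu * s2 + σsq ^ 2) := by
  rw [scaledUplinkSINR]
  ring_nf

theorem continuousAt_scaledUplinkSINR (h : Etr * Eu * s2 + σsq ^ 2 ≠ 0) :
    ContinuousAt (scaledUplinkSINR Etr Eu σsq β s1 s2 s3 sall C) 0 := by
  refine ContinuousAt.div (by fun_prop) (by fun_prop) ?_
  convert h using 1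
  ring

theorem scaledUplinkSINR_inv_sqrt (Ed A B κ βbjj M : ℝ) (hEtr : Etr ≠ 0) (hM : 0 < M) :
    Etr / √M * (Eu / √M) * (M - 1) * β ^ 2 /
      (Eu / √M * β * (σsq + Etr / √M * s1)
        + Etr / √M * (Eu / √M) * ((M + 1) * s2 + s3 + s1 * σsq / (Etr / √M))
        + (σsq + Etr / √M * sall) * (Ed / √M * A + Eu / √M * B + σsq + κ * (Ed / √M) * βbjj))
      = scaledUplinkSINR Etr Eu σsq β s1 s2 s3 sall (Ed * A + Eu * B + κ * Ed * βbjj)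
          (√M)⁻¹ := by
  obtain ⟨a, ha, rfl⟩ : ∃ a, 0 < a ∧ M = a ^ 2 := ⟨√M, sqrt_pos.mpr hM, (sq_sqrt hM.le).symm⟩
  rw [scaledUplinkSINR, sqrt_sq ha.le]
  field_simp
  ring

end ScaledSINR

theorem asymptotic_uplink_rate_imperfect_csi_general
    (L Ku : ℕ) (j : Fin L) (n : Fin Ku)
    (Etr Eu Ed σsq : ℝ) (hEtr : 0 < Etr) (hEu : 0 < Eu) (hσ : 0 < σsq)
    (κ : ℝ)
    (βu : Fin L → Fin Ku → ℝ)
    (βb : Fin L → ℝ) (βbjj : ℝ) :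
    Filter.Tendsto (fun M : ℕ =>
        let Ptr : ℝ := Etr / Real.sqrt M
        let Pu : ℝ := Eu / Real.sqrt M
        let Pd : ℝ := Ed / Real.sqrt M
        let lam : ℝ := σsq + Ptr * ∑ l, βu l n
        let Itil : ℝ := Ptr * Pu * ∑ l ∈ Finset.univ.erase j,
          (((M : ℝ) + 1) * (βu l n) ^ 2
            + (∑ l₁ ∈ Finset.univ.erase l, βu l₁ n) * βu l n
            + βu l n * σsq / Ptr)
        let Ntil : ℝ := lam * (Pd * ∑ l ∈ Finset.univ.erase j, βb l
          + Pu * ∑ l, ∑ m ∈ Finset.univ.erase n, βu l m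
          + σsq + κ * Pd * βbjj)
        Real.logb 2 (1 + Ptr * Pu * ((M : ℝ) - 1) * (βu j n) ^ 2 /
          (Pu * βu j n * (σsq + Ptr * ∑ l ∈ Finset.univ.erase j, βu l n) + Itil + Ntil)))
      Filter.atTop
      (nhds (Real.logb 2 (1 + Etr * Eu * (βu j n) ^ 2 /
        (Etr * Eu * ∑ l ∈ Finset.univ.erase j, (βu l n) ^ 2 + σsq ^ 2)))) := by
  have hden : 0 < Etr * Eu * ∑ l ∈ univ.erase j, βu l n ^ 2 + σsq ^ 2 := by positivity
  have hF0 : 1 + Etr * Eu * βu j n ^ 2 / (Etr * Eu * ∑ l ∈ univ.erase j, βu l n ^ 2 + σsq ^ 2)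
      ≠ 0 := by positivity
  rw [← scaledUplinkSINR_zero _ _ _ _ (∑ l ∈ univ.erase j, βu l n) _
    (∑ l ∈ univ.erase j, (∑ l₁ ∈ univ.erase l, βu l₁ n) * βu l n) (∑ l, βu l n)
    (Ed * ∑ l ∈ univ.erase j, βb l + Eu * ∑ l, ∑ m ∈ univ.erase n, βu l m + κ * Ed * βbjj)] at hF0 ⊢
  refine (tendsto_comp_inv_sqrt_natCast ((continuousAt_const.add
    (continuousAt_scaledUplinkSINR (h := hden.ne') ..)).logb hF0)).congr' ?_
  filter_upwards [eventually_ge_atTop 1] with M hM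
  dsimp only [Pi.add_apply]
  rw [← scaledUplinkSINR_inv_sqrt (hEtr := hEtr.ne') (hM := by exact_mod_cast hM)]
  simp only [sum_add_distrib, ← mul_sum, ← sum_mul, ← sum_div]

/-- Theorem 2, uplink per-user rate: with MMSE channel estimation and powers scaled as
`P_tr = E_tr/√M`, `P_u = E_u/√M`, `P_d = E_d/√M`, the closed-form uplink achievable rate of
user `n` in cell `j` converges to the pilot-contamination limit
`log₂(1 + E_tr·E_u·β_u(j,n)² / (E_tr·E_u·Σ_{l≠j} β_u(l,n)² + σ⁴))` as `M → ∞`. -/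
theorem asymptotic_uplink_rate_imperfect_csi
    (L Ku : ℕ) (hL : 1 ≤ L) (hKu : 1 ≤ Ku) (j : Fin L) (n : Fin Ku)
    (Etr Eu Ed σsq : ℝ) (hEtr : 0 < Etr) (hEu : 0 < Eu) (hEd : 0 < Ed) (hσ : 0 < σsq)
    (κ : ℝ) (hκ : 0 ≤ κ)
    (βu : Fin L → Fin Ku → ℝ) (hβujn : 0 < βu j n) (hβu : ∀ l m, 0 ≤ βu l m)
    (βb : Fin L → ℝ) (hβb : ∀ l, 0 ≤ βb l) (βbjj : ℝ) (hβbjj : 0 ≤ βbjj) :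
    Filter.Tendsto (fun M : ℕ =>
        let Ptr : ℝ := Etr / Real.sqrt M
        let Pu : ℝ := Eu / Real.sqrt M
        let Pd : ℝ := Ed / Real.sqrt M
        let lam : ℝ := σsq + Ptr * ∑ l, βu l n
        let Itil : ℝ := Ptr * Pu * ∑ l ∈ Finset.univ.erase j,
          (((M : ℝ) + 1) * (βu l n) ^ 2
            + (∑ l₁ ∈ Finset.univ.erase l, βu l₁ n) * βu l n
            + βu l n * σsq / Ptr)
        let Ntil : ℝ := lam * (Pd * ∑ l ∈ Finset.univ.erase j, βb l
          + Pu * ∑ l, ∑ m ∈ Finset.univ.erase n, βu l m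
          + σsq + κ * Pd * βbjj)
        Real.logb 2 (1 + Ptr * Pu * ((M : ℝ) - 1) * (βu j n) ^ 2 /
          (Pu * βu j n * (σsq + Ptr * ∑ l ∈ Finset.univ.erase j, βu l n) + Itil + Ntil)))
      Filter.atTop
      (nhds (Real.logb 2 (1 + Etr * Eu * (βu j n) ^ 2 /
        (Etr * Eu * ∑ l ∈ Finset.univ.erase j, (βu l n) ^ 2 + σsq ^ 2)))) :=
  asymptotic_uplink_rate_imperfect_csi_general L Ku j n Etr Eu Ed σsq hEtr hEu hσ κ βu βb βbjj
end

section
/- Fix L ≥ 1, K_u ≥ 1, K_d ≥ 1, cell index l ∈ Fin L, user index k ∈ Fin K_d, constants E_tr > 0, E_u > 0, E_d > 0, σ² > 0, κ ≥ 0, coefficients β : Fin L → Fin L → Fin K_d → ℝ (β j l' i is the large-scale coefficient between BS j and downlink user i of cell l') with β j j i > 0 for all j, i and β j l' i ≥ 0 otherwise, and β_I : Fin L → Fin K_u → ℝ with β_I j n ≥ 0. For M : ℕ with M ≥ 1 define P_tr(M) = E_tr/√M, P_u(M) = E_u/√M, P_d(M) = E_d/√M, λ_{j,i}(M) = σ²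 + P_tr(M)·Σ_{l₁} β j l₁ i, η̃_j(M) = ( Σ_i (β j j i)²/λ_{j,i}(M) )⁻¹, Ĩ(M) = η̃_l(M)·P_d(M)·(β l l k)³/λ_{l,k}(M) + Σ_{j≠l} η̃_j(M)·P_tr(M)·P_d(M)·(M+1)·(β j l k)²·(β j j k)²/λ_{j,k}(M)² + Σ_{j≠l} η̃_j(M)·P_d(M)·(β j j k)²·(σ² + P_tr(M)·Σ_{l₁≠l} β j l₁ k)·β j l k/λ_{j,k}(M)² + Σ_j Σ_{i≠k} η̃_j(M)·P_d(M)·(β j j i)²·β j l k/λ_{j,i}(M) + Σ_j Σ_n P_u(M)·β_I j n, and R(M) = log₂( 1 + η̃_l(M)·P_tr(M)·P_d(M)·M·(β l l k)⁴ / ( λ_{l,k}(M)²·( Ĩ(M) − P_u(M)·β_I l k + σ² + κ·P_u(M)·β_I l k ) ) ). Then, with Z_j := (Σ_i (β j j i)²)/σ², R(M) → log₂( 1 + E_tr·E_d·(β l l k)⁴ / ( Z_l·( Σ_{j≠l} E_tr·E_d·(β j j k)²·(β j l k)²/Z_j + σ⁶ ) ) ) as M → ∞ (Filter.atTop). -/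
/-!
Under the scaling `P = E/√M` every power tends to `0`, so the observation variances `λ_{j,i}` tend
to `σ²` and the precoder normalisations `η̃_j` to `σ² / Σᵢ β_{jji}²`. Every interference term carrying
a single power factor then vanishes. Only the numerator and the pilot-contamination term carry the
product `P_tr·P_d·M` (resp. `P_tr·P_d·(M+1)`), which tends to `E_tr·E_d`, and these survive.
-/

open Filter Topology Finset

variable {α : Type*} {F : Filter α} {Ptr Pu Pd M : α → ℝ}

section DownlinkSINR

variable {ι υ ν : Type*} [Fintype ι] (β : ι → ι → υ → ℝ) (σsq : ℝ)

/-- The paper's `λ_{j,i}` at training power `p`. -/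
noncomputable def pilotLoad (p : ℝ) (j : ι) (i : υ) : ℝ :=
  σsq + p * ∑ l₁, β j l₁ i

theorem tendsto_pilotLoad (hPtr : Tendsto Ptr F (𝓝 0)) (j : ι) (i : υ) :
    Tendsto (fun a => pilotLoad β σsq (Ptr a) j i) F (𝓝 σsq) := by
  simpa [pilotLoad] using (hPtr.mul_const (∑ l₁, β j l₁ i)).const_add σsq

variable [Fintype υ]

/-- The paper's `η̃_j` at training power `p`. -/
noncomputable def precoderNorm (p : ℝ) (j : ι) : ℝ :=
  (∑ i, β j j i ^ 2 / pilotLoad β σsq p j i)⁻¹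

theorem tendsto_precoderNorm (hσ : σsq ≠ 0) {j : ι} (hS : ∑ i, β j j i ^ 2 ≠ 0)
    (hPtr : Tendsto Ptr F (𝓝 0)) :
    Tendsto (fun a => precoderNorm β σsq (Ptr a) j) F (𝓝 (σsq / ∑ i, β j j i ^ 2)) := by
  have hsum : Tendsto (fun a => ∑ i, β j j i ^ 2 / pilotLoad β σsq (Ptr a) j i) F
      (𝓝 ((∑ i, β j j i ^ 2) / σsq)) := by
    rw [sum_div]
    exact tendsto_finsetSum _ fun i _ =>
      tendsto_const_nhds.div (tendsto_pilotLoad β σsq hPtr j i) hσ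
  rw [← inv_div]
  exact hsum.inv₀ (div_ne_zero hS hσ)

variable [DecidableEq ι]

noncomputable def pilotContaminationSINR (E : ℝ) (l : ι) (k : υ) : ℝ :=
  E * β l l k ^ 4 / ((∑ i, β l l i ^ 2) / σsq *
    (∑ j ∈ univ.erase l, E * β j j k ^ 2 * β j l k ^ 2 / ((∑ i, β j j i ^ 2) / σsq) + σsq ^ 3))

theorem pilotContaminationSINR_nonneg {E : ℝ} (hE : 0 ≤ E) (hσ : 0 < σsq) (l : ι) (k : υ) :
    0 ≤ pilotContaminationSINR β σsq E l k := by
  have : 0 ≤ ∑ j ∈ univ.erase l, E * β j j k ^ 2 * β j l k ^ 2 / ((∑ i, β j j i ^ 2) / σsq) :=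
    sum_nonneg fun j _ => by positivity
  unfold pilotContaminationSINR
  positivity

variable [DecidableEq υ] [Fintype ν] (βI : ι → ν → ℝ)

/-- The paper's `Ĩ` for user `k` of cell `l` with `M` antennas. -/
noncomputable def downlinkInterference (Ptr Pu Pd M : ℝ) (l : ι) (k : υ) : ℝ :=
  precoderNorm β σsq Ptr l * Pd * β l l k ^ 3 / pilotLoad β σsq Ptr l k
    + ∑ j ∈ univ.erase l, precoderNorm β σsq Ptr j * Ptr * Pd * (M + 1) * β j l k ^ 2
        * β j j k ^ 2 / pilotLoad β σsq Ptr j k ^ 2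
    + ∑ j ∈ univ.erase l, precoderNorm β σsq Ptr j * Pd * β j j k ^ 2
        * (σsq + Ptr * ∑ l₁ ∈ univ.erase l, β j l₁ k) * β j l k / pilotLoad β σsq Ptr j k ^ 2
    + ∑ j, ∑ i ∈ univ.erase k, precoderNorm β σsq Ptr j * Pd * β j j i ^ 2 * β j l k
        / pilotLoad β σsq Ptr j i
    + ∑ j, ∑ n, Pu * βI j n

/-- The SINR of Proposition 2, `R = log₂ (1 + SINR)`, with the self-interference of the
full-duplex user `ku` replaced by its residual `κ·P_u·β_I`. -/
noncomputable def downlinkSINR (κ Ptr Pu Pd M : ℝ) (l : ι) (kd : υ) (ku : ν) : ℝ :=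
  precoderNorm β σsq Ptr l * Ptr * Pd * M * β l l kd ^ 4 /
    (pilotLoad β σsq Ptr l kd ^ 2 * (downlinkInterference β σsq βI Ptr Pu Pd M l kd
      - Pu * βI l ku + σsq + κ * Pu * βI l ku))

theorem tendsto_downlinkInterference (hσ : σsq ≠ 0) (hS : ∀ j, ∑ i, β j j i ^ 2 ≠ 0)
    (hPtr : Tendsto Ptr F (𝓝 0)) (hPu : Tendsto Pu F (𝓝 0)) (hPd : Tendsto Pd F (𝓝 0))
    {E : ℝ} (hM : Tendsto (fun a => Ptr a * Pd a * M a) F (𝓝 E)) (l : ι) (k : υ) :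
    Tendsto (fun a => downlinkInterference β σsq βI (Ptr a) (Pu a) (Pd a) (M a) l k) F
      (𝓝 ((∑ j ∈ univ.erase l, E * β j j k ^ 2 * β j l k ^ 2 / ((∑ i, β j j i ^ 2) / σsq))
        / σsq ^ 2)) := by
  have hη j := tendsto_precoderNorm β σsq hσ (hS j) hPtr
  have hload := tendsto_pilotLoad β σsq hPtr
  have hM₁ : Tendsto (fun a => Ptr a * Pd a * (M a + 1)) F (𝓝 E) := by
    simpa [mul_add] using hM.add (hPtr.mul hPd)
  have hself := (((hη l).mul hPd).mul_const (β l l k ^ 3)).div (hload l k) hσ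
  -- `hM₁` enters as the group `P_tr·P_d·(M+1)`, matched against the definition up to `mul_assoc`.
  have hcontam := tendsto_finsetSum (univ.erase l) fun j _ =>
    (((((hη j).mul hM₁).mul_const (β j l k ^ 2)).mul_const (β j j k ^ 2)).div
      ((hload j k).pow 2) (pow_ne_zero 2 hσ))
  have hcross := tendsto_finsetSum (univ.erase l) fun j _ =>
    (((((hη j).mul hPd).mul_const (β j j k ^ 2)).mul
      ((hPtr.mul_const (∑ l₁ ∈ univ.erase l, β j l₁ k)).const_add σsq)).mul_const (β j l k)).div
      ((hload j k).pow 2) (pow_ne_zero 2 hσ)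
  have hother := tendsto_finsetSum univ fun j _ => tendsto_finsetSum (univ.erase k) fun i _ =>
    ((((hη j).mul hPd).mul_const (β j j i ^ 2)).mul_const (β j l k)).div (hload j i) hσ
  have huplink := tendsto_finsetSum univ fun j _ => tendsto_finsetSum univ fun n _ =>
    hPu.mul_const (βI j n)
  convert (((hself.add hcontam).add hcross).add hother).add huplink using 2
  · simp only [downlinkInterference, Pi.div_apply, mul_assoc]
  · simp only [mul_zero, zero_mul, zero_div, sum_const_zero, zero_add, add_zero]
    rw [sum_div]
    refine sum_congr rfl fun j _ => ?_
    rw [div_div_eq_mul_div]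
    ring

theorem tendsto_downlinkSINR (hσ : 0 < σsq) (hS : ∀ j, ∑ i, β j j i ^ 2 ≠ 0) (κ : ℝ)
    (hPtr : Tendsto Ptr F (𝓝 0)) (hPu : Tendsto Pu F (𝓝 0)) (hPd : Tendsto Pd F (𝓝 0))
    {E : ℝ} (hE : 0 ≤ E) (hM : Tendsto (fun a => Ptr a * Pd a * M a) F (𝓝 E))
    (l : ι) (kd : υ) (ku : ν) :
    Tendsto (fun a => downlinkSINR β σsq βI κ (Ptr a) (Pu a) (Pd a) (M a) l kd ku) F
      (𝓝 (pilotContaminationSINR β σsq E l kd)) := by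
  have hX : 0 ≤ ∑ j ∈ univ.erase l, E * β j j kd ^ 2 * β j l kd ^ 2 / ((∑ i, β j j i ^ 2) / σsq) :=
    sum_nonneg fun j _ => by positivity
  have hnum := ((tendsto_precoderNorm β σsq hσ.ne' (hS l) hPtr).mul hM).mul_const (β l l kd ^ 4)
  have hden := ((tendsto_pilotLoad β σsq hPtr l kd).pow 2).mul
    ((((tendsto_downlinkInterference β σsq βI hσ.ne' hS hPtr hPu hPd hM l kd).sub
      (hPu.mul_const (βI l ku))).add_const σsq).add ((hPu.const_mul κ).mul_const (βI l ku)))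
  simp only [mul_zero, zero_mul, sub_zero, add_zero] at hden
  convert hnum.div hden (by positivity) using 2 with a
  · simp only [downlinkSINR, Pi.div_apply]
    ring
  · unfold pilotContaminationSINR
    generalize (∑ j ∈ univ.erase l, E * β j j kd ^ 2 * β j l kd ^ 2 / ((∑ i, β j j i ^ 2) / σsq))
      = X at hX ⊢
    have := hS l
    field_simp

end DownlinkSINR

theorem tendsto_const_div_sqrt_natCast (c : ℝ) :
    Tendsto (fun M : ℕ => c / Real.sqrt M) atTop (𝓝 0) :=
  tendsto_const_nhds.div_atTop (Real.tendsto_sqrt_atTop.comp tendsto_natCast_atTop_atTop)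

theorem div_sqrt_mul_div_sqrt_mul_self {M : ℝ} (hM : 0 < M) (a b : ℝ) :
    a / Real.sqrt M * (b / Real.sqrt M) * M = a * b := by
  rw [div_mul_div_comm, ← sq, Real.sq_sqrt hM.le, div_mul_cancel₀ _ hM.ne']

theorem asymptotic_downlink_rate_imperfect_csi_general
    (L Ku Kd : ℕ)
    (l : Fin L) (k : ℕ) (hkd : k < Kd) (hku : k < Ku)
    (Etr Eu Ed σsq : ℝ) (hEtr : 0 < Etr) (hEd : 0 < Ed) (hσ : 0 < σsq)
    (κ : ℝ)
    (β : Fin L → Fin L → Fin Kd → ℝ)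
    (hβpos : ∀ j i, 0 < β j j i)
    (βI : Fin L → Fin Ku → ℝ) :
    Filter.Tendsto (fun M : ℕ =>
        let Ptr : ℝ := Etr / Real.sqrt M
        let Pu : ℝ := Eu / Real.sqrt M
        let Pd : ℝ := Ed / Real.sqrt M
        let kd : Fin Kd := ⟨k, hkd⟩
        let ku : Fin Ku := ⟨k, hku⟩
        let lam : Fin L → Fin Kd → ℝ := fun j i => σsq + Ptr * ∑ l₁, β j l₁ i
        let η : Fin L → ℝ := fun j => (∑ i, (β j j i) ^ 2 / lam j i)⁻¹
        let Itil : ℝ := η l * Pd * (β l l kd) ^ 3 / lam l kd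
          + ∑ j ∈ Finset.univ.erase l,
              η j * Ptr * Pd * ((M : ℝ) + 1) * (β j l kd) ^ 2 * (β j j kd) ^ 2 / (lam j kd) ^ 2
          + ∑ j ∈ Finset.univ.erase l,
              η j * Pd * (β j j kd) ^ 2 * (σsq + Ptr * ∑ l₁ ∈ Finset.univ.erase l, β j l₁ kd)
                * β j l kd / (lam j kd) ^ 2
          + ∑ j, ∑ i ∈ Finset.univ.erase kd, η j * Pd * (β j j i) ^ 2 * β j l kd / lam j i
          + ∑ j, ∑ n, Pu * βI j n
        Real.logb 2 (1 + η l * Ptr * Pd * M * (β l l kd) ^ 4 /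
          ((lam l kd) ^ 2 * (Itil - Pu * βI l ku + σsq + κ * Pu * βI l ku))))
      Filter.atTop
      (nhds (Real.logb 2 (1 + Etr * Ed * (β l l ⟨k, hkd⟩) ^ 4 /
        ((∑ i, (β l l i) ^ 2) / σsq *
          (∑ j ∈ Finset.univ.erase l,
              Etr * Ed * (β j j ⟨k, hkd⟩) ^ 2 * (β j l ⟨k, hkd⟩) ^ 2 / ((∑ i, (β j j i) ^ 2) / σsq)
            + σsq ^ 3))))) := by
  have hS j : ∑ i, β j j i ^ 2 ≠ 0 :=
    (sum_pos' (fun i _ => sq_nonneg _) ⟨⟨k, hkd⟩, mem_univ _, pow_pos (hβpos j _) 2⟩).ne'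
  have hM : Tendsto (fun M : ℕ => Etr / Real.sqrt M * (Ed / Real.sqrt M) * M) atTop
      (𝓝 (Etr * Ed)) :=
    tendsto_const_nhds.congr' <| (eventually_gt_atTop 0).mono fun M hM =>
      (div_sqrt_mul_div_sqrt_mul_self (Nat.cast_pos.mpr hM) Etr Ed).symm
  have hSINR := tendsto_downlinkSINR β σsq βI hσ hS κ (tendsto_const_div_sqrt_natCast Etr)
    (tendsto_const_div_sqrt_natCast Eu) (tendsto_const_div_sqrt_natCast Ed)
    (mul_pos hEtr hEd).le hM l ⟨k, hkd⟩ ⟨k, hku⟩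
  have hpos : 1 + pilotContaminationSINR β σsq (Etr * Ed) l ⟨k, hkd⟩ ≠ 0 := by
    linarith [pilotContaminationSINR_nonneg β σsq (mul_pos hEtr hEd).le hσ l ⟨k, hkd⟩]
  exact (Real.continuousAt_logb hpos).tendsto.comp (hSINR.const_add 1)

/-- Theorem 2, downlink per-user rate: with MMSE channel estimation and powers scaled as
`P_tr = E_tr/√M`, `P_u = E_u/√M`, `P_d = E_d/√M`, the closed-form downlink achievable rate of
full-duplex user `k` in cell `l` converges to the pilot-contamination limit
`log₂(1 + E_tr·E_d·β(l,l,k)⁴ / (Z_l·(Σ_{j≠l} E_tr·E_d·β(j,j,k)²·β(j,l,k)²/Z_j + σ⁶)))`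
as `M → ∞`, where `Z_j = (Σᵢ β(j,j,i)²)/σ²`. -/
theorem asymptotic_downlink_rate_imperfect_csi
    (L Ku Kd : ℕ) (hL : 1 ≤ L) (hKu : 1 ≤ Ku) (hKd : 1 ≤ Kd)
    (l : Fin L) (k : ℕ) (hkd : k < Kd) (hku : k < Ku)
    (Etr Eu Ed σsq : ℝ) (hEtr : 0 < Etr) (hEu : 0 < Eu) (hEd : 0 < Ed) (hσ : 0 < σsq)
    (κ : ℝ) (hκ : 0 ≤ κ)
    (β : Fin L → Fin L → Fin Kd → ℝ)
    (hβpos : ∀ j i, 0 < β j j i) (hβ : ∀ j l' i, 0 ≤ β j l' i)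
    (βI : Fin L → Fin Ku → ℝ) (hβI : ∀ j n, 0 ≤ βI j n) :
    Filter.Tendsto (fun M : ℕ =>
        let Ptr : ℝ := Etr / Real.sqrt M
        let Pu : ℝ := Eu / Real.sqrt M
        let Pd : ℝ := Ed / Real.sqrt M
        let kd : Fin Kd := ⟨k, hkd⟩
        let ku : Fin Ku := ⟨k, hku⟩
        let lam : Fin L → Fin Kd → ℝ := fun j i => σsq + Ptr * ∑ l₁, β j l₁ i
        let η : Fin L → ℝ := fun j => (∑ i, (β j j i) ^ 2 / lam j i)⁻¹
        let Itil : ℝ := η l * Pd * (β l l kd) ^ 3 / lam l kd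
          + ∑ j ∈ Finset.univ.erase l,
              η j * Ptr * Pd * ((M : ℝ) + 1) * (β j l kd) ^ 2 * (β j j kd) ^ 2 / (lam j kd) ^ 2
          + ∑ j ∈ Finset.univ.erase l,
              η j * Pd * (β j j kd) ^ 2 * (σsq + Ptr * ∑ l₁ ∈ Finset.univ.erase l, β j l₁ kd)
                * β j l kd / (lam j kd) ^ 2
          + ∑ j, ∑ i ∈ Finset.univ.erase kd, η j * Pd * (β j j i) ^ 2 * β j l kd / lam j i
          + ∑ j, ∑ n, Pu * βI j n
        Real.logb 2 (1 + η l * Ptr * Pd * M * (β l l kd) ^ 4 /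
          ((lam l kd) ^ 2 * (Itil - Pu * βI l ku + σsq + κ * Pu * βI l ku))))
      Filter.atTop
      (nhds (Real.logb 2 (1 + Etr * Ed * (β l l ⟨k, hkd⟩) ^ 4 /
        ((∑ i, (β l l i) ^ 2) / σsq *
          (∑ j ∈ Finset.univ.erase l,
              Etr * Ed * (β j j ⟨k, hkd⟩) ^ 2 * (β j l ⟨k, hkd⟩) ^ 2 / ((∑ i, (β j j i) ^ 2) / σsq)
            + σsq ^ 3))))) :=
  asymptotic_downlink_rate_imperfect_csi_general L Ku Kd l k hkd hku Etr Eu Ed σsq hEtr hEd hσ κ β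
    hβpos βI
end

section
/- Fix L ≥ 1, K_u ≥ 1, cell index j ∈ Fin L, user index n ∈ Fin K_u, constants E_u > 0, E_d > 0, σ² > 0, κ ≥ 0, a scaling exponent C > 1, coefficients β_u : Fin L → Fin K_u → ℝ with β_u j n > 0 and β_u l m ≥ 0, β_b : Fin L → ℝ with β_b l ≥ 0, and β_bjj ≥ 0. For M : ℕ define P_u(M) = E_u/M^C, P_d(M) = E_d/M^C and R(M) = log₂( 1 + P_u(M)·(M−1)·β_u j n / ( P_u(M)·Σ_{(l,m)≠(j,n)} β_u l m + P_d(M)·Σ_{l≠j} β_b l + σ² + κ·P_d(M)·β_bjj ) ). Then R(M) → 0 as M → ∞ (Filter.atTop). -/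
/-! The received signal power scales as `M^(1-C) → 0`, while the interference-plus-noise power
tends to `σ² > 0`; hence the SINR tends to `0` and so does `log₂ (1 + SINR)`. -/

open Filter Topology Real

theorem tendsto_sub_one_div_rpow_atTop {C : ℝ} (hC : 1 < C) :
    Tendsto (fun x : ℝ => (x - 1) / x ^ C) atTop (𝓝 0) := by
  have hdiff : Tendsto (fun x : ℝ => x ^ (-(C - 1)) - x ^ (-C)) atTop (𝓝 (0 - 0)) :=
    (tendsto_rpow_neg_atTop (by linarith)).sub (tendsto_rpow_neg_atTop (by linarith))
  rw [sub_zero] at hdiff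
  refine hdiff.congr' ?_
  filter_upwards [eventually_gt_atTop 0] with x hx
  rw [sub_div, rpow_neg hx.le, rpow_neg hx.le, rpow_sub hx, rpow_one,
    inv_div, one_div]

theorem tendsto_logb_one_add_of_tendsto_zero {α : Type*} {l : Filter α} {f : α → ℝ} (b : ℝ)
    (hf : Tendsto f l (𝓝 0)) : Tendsto (fun a => logb b (1 + f a)) l (𝓝 0) := by
  have h := hf.const_add 1
  rw [add_zero] at h
  simpa [Function.comp_def] using (continuousAt_logb (b := b) one_ne_zero).tendsto.comp h

theorem uplink_rate_tendsto_zero_of_fast_power_scaling_general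
    (L Ku : ℕ) (j : Fin L) (n : Fin Ku)
    (Eu Ed σsq : ℝ) (hσ : 0 < σsq)
    (κ : ℝ) (C : ℝ) (hC : 1 < C)
    (βu : Fin L → Fin Ku → ℝ)
    (βb : Fin L → ℝ) (βbjj : ℝ) :
    Filter.Tendsto (fun M : ℕ =>
        let Pu : ℝ := Eu / (M : ℝ) ^ C
        let Pd : ℝ := Ed / (M : ℝ) ^ C
        Real.logb 2 (1 + Pu * ((M : ℝ) - 1) * βu j n /
          (Pu * ∑ p ∈ Finset.univ.erase (j, n), βu p.1 p.2
            + Pd * ∑ l ∈ Finset.univ.erase j, βb l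
            + σsq + κ * Pd * βbjj)))
      Filter.atTop (nhds 0) := by
  have hpower (E : ℝ) : Tendsto (fun x : ℝ => E / x ^ C) atTop (𝓝 0) :=
    tendsto_const_nhds.div_atTop (tendsto_rpow_atTop (by linarith))
  have hsignal : Tendsto (fun x : ℝ => Eu / x ^ C * (x - 1) * βu j n) atTop (𝓝 0) := by
    simpa using ((tendsto_sub_one_div_rpow_atTop hC).const_mul (Eu * βu j n)).congr
      fun x => by ring
  have hinterference : Tendsto (fun x : ℝ =>
      Eu / x ^ C * ∑ p ∈ Finset.univ.erase (j, n), βu p.1 p.2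
        + Ed / x ^ C * ∑ l ∈ Finset.univ.erase j, βb l
        + σsq + κ * (Ed / x ^ C) * βbjj) atTop (𝓝 σsq) := by
    simpa using (((hpower Eu).mul_const _).add ((hpower Ed).mul_const _)).add_const σsq |>.add
      (((hpower Ed).const_mul κ).mul_const βbjj)
  have hsinr := hsignal.div hinterference hσ.ne'
  rw [zero_div] at hsinr
  exact (tendsto_logb_one_add_of_tendsto_zero 2 hsinr).comp tendsto_natCast_atTop_atTop

/-- Remark 1, first half: with perfect CSI and transmit powers scaled as `1/M^C` with `C > 1`,
the closed-form uplink achievable rate of user `n` in cell `j` tends to zero as `M → ∞`. -/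
theorem uplink_rate_tendsto_zero_of_fast_power_scaling
    (L Ku : ℕ) (hL : 1 ≤ L) (hKu : 1 ≤ Ku) (j : Fin L) (n : Fin Ku)
    (Eu Ed σsq : ℝ) (hEu : 0 < Eu) (hEd : 0 < Ed) (hσ : 0 < σsq)
    (κ : ℝ) (hκ : 0 ≤ κ) (C : ℝ) (hC : 1 < C)
    (βu : Fin L → Fin Ku → ℝ) (hβujn : 0 < βu j n) (hβu : ∀ l m, 0 ≤ βu l m)
    (βb : Fin L → ℝ) (hβb : ∀ l, 0 ≤ βb l) (βbjj : ℝ) (hβbjj : 0 ≤ βbjj) :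
    Filter.Tendsto (fun M : ℕ =>
        let Pu : ℝ := Eu / (M : ℝ) ^ C
        let Pd : ℝ := Ed / (M : ℝ) ^ C
        Real.logb 2 (1 + Pu * ((M : ℝ) - 1) * βu j n /
          (Pu * ∑ p ∈ Finset.univ.erase (j, n), βu p.1 p.2
            + Pd * ∑ l ∈ Finset.univ.erase j, βb l
            + σsq + κ * Pd * βbjj)))
      Filter.atTop (nhds 0) :=
  uplink_rate_tendsto_zero_of_fast_power_scaling_general L Ku j n Eu Ed σsq hσ κ C hC βu βb βbjj
end
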